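/- Let X and Y be Banach spaces and let f : ℝ × Y → X be pseudo-almost automorphic in t uniformly in the second variable. Suppose that for each bounded subset K of Y, x ↦ f(t,x) is uniformly continuous on K uniformly in t ∈ ℝ (i.e., for every ε > 0 there is δ > 0 such that ‖f(t,x) − f(t,y)‖ ≤ ε for all t ∈ ℝ and x, y ∈ K with ‖x−y‖_Y ≤ δ). Then for every φ ∈ PAA(Y), the function h(t) := f(t, φ(t)) belongs to PAA(X). -/

import Mathlib

open MeasureTheory Filter Topology Bornology

noncomputable section

/-- A continuous function `f : ℝ → Z` is almost automorphic if for every sequence of reals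
there is a subsequence `s ∘ k` and a function `g` with `f (t + s (k n)) → g t` and
`g (t - s (k n)) → f t` pointwise in norm. -/
def AlmostAutomorphicFn {Z : Type*} [NormedAddCommGroup Z] (f : ℝ → Z) : Prop :=
  Continuous f ∧ ∀ s' : ℕ → ℝ, ∃ k : ℕ → ℕ, StrictMono k ∧ ∃ g : ℝ → Z,
    (∀ t : ℝ, Tendsto (fun n => f (t + s' (k n))) atTop (𝓝 (g t))) ∧
    (∀ t : ℝ, Tendsto (fun n => g (t - s' (k n))) atTop (𝓝 (f t)))

/-- `PAPZeroFn f` : `f` is bounded continuous and `(1/(2r)) ∫_{-r}^r ‖f s‖ ds → 0` as `r → ∞`. -/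
def PAPZeroFn {Z : Type*} [NormedAddCommGroup Z] (f : ℝ → Z) : Prop :=
  Continuous f ∧ (∃ M : ℝ, ∀ t : ℝ, ‖f t‖ ≤ M) ∧
  Tendsto (fun r : ℝ => (1 / (2 * r)) * ∫ s in (-r)..r, ‖f s‖) atTop (𝓝 0)

/-- A bounded continuous function is pseudo-almost automorphic if it decomposes as the sum of
an almost automorphic function and an ergodic (`PAPZeroFn`) perturbation. -/
def PseudoAlmostAutomorphicFn {Z : Type*} [NormedAddCommGroup Z] (f : ℝ → Z) : Prop :=
  Continuous f ∧ (∃ M : ℝ, ∀ t : ℝ, ‖f t‖ ≤ M) ∧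
  ∃ g φ : ℝ → Z, AlmostAutomorphicFn g ∧ PAPZeroFn φ ∧ ∀ t : ℝ, f t = g t + φ t

/-- `F : ℝ × Y → X` jointly continuous, almost automorphic in `t` uniformly for the second
variable in bounded sets. -/
def AAUnifFn {Y X : Type*} [NormedAddCommGroup Y] [NormedAddCommGroup X]
    (F : ℝ → Y → X) : Prop :=
  Continuous (fun p : ℝ × Y => F p.1 p.2) ∧
  ∀ K : Set Y, IsBounded K → ∀ s' : ℕ → ℝ, ∃ k : ℕ → ℕ, StrictMono k ∧
    ∃ G : ℝ → Y → X,
      (∀ t : ℝ, ∀ x ∈ K, Tendsto (fun n => F (t + s' (k n)) x) atTop (𝓝 (G t x))) ∧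
      (∀ t : ℝ, ∀ x ∈ K, Tendsto (fun n => G (t - s' (k n)) x) atTop (𝓝 (F t x)))

/-- Bounded continuous `F` with `(1/(2r)) ∫_{-r}^r ‖F (s, x)‖ ds → 0` as `r → ∞`,
uniformly for `x` in bounded subsets of `Y`. -/
def PAPZeroUnifFn {Y X : Type*} [NormedAddCommGroup Y] [NormedAddCommGroup X]
    (F : ℝ → Y → X) : Prop :=
  Continuous (fun p : ℝ × Y => F p.1 p.2) ∧
  (∀ K : Set Y, IsBounded K → ∃ M : ℝ, ∀ t : ℝ, ∀ x ∈ K, ‖F t x‖ ≤ M) ∧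
  ∀ K : Set Y, IsBounded K → ∀ ε > (0 : ℝ), ∃ r₀ : ℝ, 0 < r₀ ∧ ∀ r ≥ r₀, ∀ x ∈ K,
    (1 / (2 * r)) * (∫ s in (-r)..r, ‖F s x‖) ≤ ε

/-- `F` is pseudo-almost automorphic in `t` uniformly in the second variable. -/
def PAAUnifFn {Y X : Type*} [NormedAddCommGroup Y] [NormedAddCommGroup X]
    (F : ℝ → Y → X) : Prop :=
  ∃ G Φ : ℝ → Y → X, AAUnifFn G ∧ PAPZeroUnifFn Φ ∧ ∀ (t : ℝ) (x : Y), F t x = G t x + Φ t x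

/-!
The key fact is that an almost automorphic function with vanishing mean is zero. Writing
`f = G + Φ`, it applies to `(‖G(·,x) - G(·,y)‖ - ε)⁺ ≤ ‖Φ(·,x) - Φ(·,y)‖` and shows that `G`
inherits the uniform continuity of `f`; a diagonal subsequence then makes `G(t, g t)`
almost automorphic, where `φ = g + ψ`. The remainder
`f(t, φ t) - G(t, g t) = (f(t, φ t) - f(t, g t)) + Φ(t, g t)` is ergodic: the first term is
controlled by `‖ψ‖` through uniform continuity, the second by finitely many `Φ(·, g σ)`, since
the range of `g` is totally bounded.
-/

open Set

section CenteredMean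

def centeredMean (u : ℝ → ℝ) (r : ℝ) : ℝ := (1 / (2 * r)) * ∫ s in (-r)..r, u s

variable {u v : ℝ → ℝ} {r : ℝ}

lemma centeredMean_nonneg (hu : ∀ s, 0 ≤ u s) (hr : 0 < r) : 0 ≤ centeredMean u r :=
  mul_nonneg (by positivity) (intervalIntegral.integral_nonneg (by linarith) fun s _ => hu s)

lemma centeredMean_mono (hu : Continuous u) (hv : Continuous v) (huv : ∀ s, u s ≤ v s)
    (hr : 0 < r) : centeredMean u r ≤ centeredMean v r :=
  mul_le_mul_of_nonneg_left (intervalIntegral.integral_mono_on (by linarith)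
    (hu.intervalIntegrable _ _) (hv.intervalIntegrable _ _) fun s _ => huv s) (by positivity)

lemma centeredMean_add (hu : Continuous u) (hv : Continuous v) (r : ℝ) :
    centeredMean (fun s => u s + v s) r = centeredMean u r + centeredMean v r := by
  simp only [centeredMean, intervalIntegral.integral_add (hu.intervalIntegrable _ _)
    (hv.intervalIntegrable _ _), mul_add]

lemma centeredMean_const (hr : r ≠ 0) (c : ℝ) : centeredMean (fun _ => c) r = c := by
  simp only [centeredMean, intervalIntegral.integral_const, smul_eq_mul]
  field_simp
  ring

lemma centeredMean_const_mul (c : ℝ) (u : ℝ → ℝ) (r : ℝ) :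
    centeredMean (fun s => c * u s) r = c * centeredMean u r := by
  simp only [centeredMean, intervalIntegral.integral_const_mul]
  ring

lemma tendsto_centeredMean_zero (hu : ∀ s, 0 ≤ u s)
    (h : ∀ ε > 0, ∀ᶠ r in atTop, centeredMean u r ≤ ε) :
    Tendsto (centeredMean u) atTop (𝓝 0) :=
  tendsto_order.2 ⟨fun _ ha => (eventually_gt_atTop 0).mono fun _ hr =>
      ha.trans_le (centeredMean_nonneg hu hr),
    fun _ ha => (h _ (half_pos ha)).mono fun _ hr => hr.trans_lt (half_lt_self ha)⟩

/-- Some window of half-length `d` carries little mass: otherwise the `M` disjoint windows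
tiling `[-M d, M d]` would make the centered mean at least `δ / (2 d)`. -/
lemma exists_intervalIntegral_le_of_tendsto_centeredMean (hu : Continuous u)
    (hmean : Tendsto (centeredMean u) atTop (𝓝 0)) {d δ : ℝ} (hd : 0 < d) (hδ : 0 < δ) :
    ∃ τ, ∫ s in (τ - d)..(τ + d), u s ≤ δ := by
  obtain ⟨M, hM, hM1⟩ : ∃ M : ℕ, centeredMean u (M * d) < δ / (2 * d) ∧ 1 ≤ M :=
    (((tendsto_natCast_atTop_atTop.atTop_mul_const hd).eventually
      (hmean.eventually_lt_const (by positivity))).and (eventually_ge_atTop 1)).exists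
  obtain ⟨a, ha⟩ : ∃ a : ℕ → ℝ, ∀ j, a j = (2 * j - M) * d := ⟨_, fun _ => rfl⟩
  have htotal : ∑ j ∈ Finset.range M, ∫ s in a j..a (j + 1), u s
      ≤ ∑ j ∈ Finset.range M, δ := by
    rw [intervalIntegral.sum_integral_adjacent_intervals fun j _ => hu.intervalIntegrable _ _]
    simp only [centeredMean] at hM
    rw [one_div, inv_mul_lt_iff₀ (by positivity)] at hM
    calc ∫ s in a 0..a M, u s = ∫ s in (-(M * d))..(M * d), u s := by
          rw [ha, ha]; congr 1 <;> push_cast <;> ring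
      _ ≤ 2 * (M * d) * (δ / (2 * d)) := hM.le
      _ = ∑ j ∈ Finset.range M, δ := by
          simp only [Finset.sum_const, Finset.card_range, nsmul_eq_mul]; field_simp
  obtain ⟨j, -, hj⟩ := Finset.exists_le_of_sum_le (by simp; omega) htotal
  refine ⟨(2 * j + 1 - M) * d, Eq.trans_le ?_ hj⟩
  rw [ha, ha]
  congr 1 <;> push_cast <;> ring

end CenteredMean

lemma papZeroFn_iff {Z : Type*} [NormedAddCommGroup Z] {f : ℝ → Z} :
    PAPZeroFn f ↔ Continuous f ∧ (∃ M, ∀ t, ‖f t‖ ≤ M) ∧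
      Tendsto (centeredMean fun s => ‖f s‖) atTop (𝓝 0) := Iff.rfl

namespace PAPZeroFn

variable {Z Z' Z'' : Type*} [NormedAddCommGroup Z] [NormedAddCommGroup Z'] [NormedAddCommGroup Z'']

lemma zero : PAPZeroFn (fun _ : ℝ => (0 : Z)) :=
  ⟨continuous_const, ⟨0, by simp⟩, by simp⟩

lemma norm {f : ℝ → Z} (hf : PAPZeroFn f) : PAPZeroFn (fun t => ‖f t‖) :=
  ⟨hf.1.norm, by simpa using hf.2.1, by simpa using hf.2.2⟩

lemma of_norm_le_add {q : ℝ → Z} {a : ℝ → Z'} {b : ℝ → Z''} (hq : Continuous q)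
    (ha : PAPZeroFn a) (hb : PAPZeroFn b) (h : ∀ s, ‖q s‖ ≤ ‖a s‖ + ‖b s‖) : PAPZeroFn q := by
  obtain ⟨hac, ⟨Ma, hMa⟩, hmean_a⟩ := papZeroFn_iff.1 ha
  obtain ⟨hbc, ⟨Mb, hMb⟩, hmean_b⟩ := papZeroFn_iff.1 hb
  refine papZeroFn_iff.2 ⟨hq, ⟨Ma + Mb, fun s => (h s).trans (add_le_add (hMa s) (hMb s))⟩, ?_⟩
  refine tendsto_of_tendsto_of_tendsto_of_le_of_le' tendsto_const_nhds
    (by simpa using hmean_a.add hmean_b) ?_ ?_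
    <;> filter_upwards [eventually_gt_atTop 0] with r hr
  · exact centeredMean_nonneg (fun _ => norm_nonneg _) hr
  · rw [← centeredMean_add hac.norm hbc.norm]
    exact centeredMean_mono hq.norm (hac.norm.add hbc.norm) h hr

lemma add {a b : ℝ → Z} (ha : PAPZeroFn a) (hb : PAPZeroFn b) : PAPZeroFn (fun t => a t + b t) :=
  of_norm_le_add (ha.1.add hb.1) ha hb fun _ => norm_add_le _ _

lemma sub {a b : ℝ → Z} (ha : PAPZeroFn a) (hb : PAPZeroFn b) : PAPZeroFn (fun t => a t - b t) :=
  of_norm_le_add (ha.1.sub hb.1) ha hb fun _ => norm_sub_le _ _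

lemma sum {ι : Type*} (S : Finset ι) {f : ι → ℝ → Z} (hf : ∀ i ∈ S, PAPZeroFn (f i)) :
    PAPZeroFn (fun t => ∑ i ∈ S, f i t) := by
  classical
  induction S using Finset.induction_on with
  | empty => simpa using zero
  | insert i S hi ih =>
    simp only [Finset.sum_insert hi]
    exact (hf i (Finset.mem_insert_self i S)).add
      (ih fun j hj => hf j (Finset.mem_insert_of_mem hj))

lemma const_smul [NormedSpace ℝ Z] {f : ℝ → Z} (hf : PAPZeroFn f) (c : ℝ) :
    PAPZeroFn (fun t => c • f t) := by
  obtain ⟨hfc, ⟨M, hM⟩, hmean⟩ := papZeroFn_iff.1 hf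
  refine papZeroFn_iff.2 ⟨hfc.const_smul c, ⟨‖c‖ * M, fun t => ?_⟩, ?_⟩
  · rw [norm_smul]
    exact mul_le_mul_of_nonneg_left (hM t) (norm_nonneg c)
  · convert hmean.const_mul ‖c‖ using 1
    · ext r
      simp only [norm_smul, centeredMean_const_mul]
    · rw [mul_zero]

lemma of_forall_norm_le_add {q : ℝ → Z} (hq : Continuous q)
    (h : ∀ ε > 0, ∃ w : ℝ → Z', PAPZeroFn w ∧ ∀ s, ‖q s‖ ≤ ε + ‖w s‖) : PAPZeroFn q := by
  refine papZeroFn_iff.2 ⟨hq, ?_, tendsto_centeredMean_zero (fun _ => norm_nonneg _) fun ε hε => ?_⟩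
  · obtain ⟨w, ⟨-, ⟨M, hM⟩, -⟩, hqw⟩ := h 1 one_pos
    exact ⟨1 + M, fun s => (hqw s).trans (by linarith [hM s])⟩
  · obtain ⟨w, hw, hqw⟩ := h (ε / 2) (half_pos hε)
    obtain ⟨hwc, -, hmean⟩ := papZeroFn_iff.1 hw
    filter_upwards [hmean.eventually_lt_const (half_pos hε), eventually_gt_atTop 0]
      with r hwr hr
    calc centeredMean (fun s => ‖q s‖) r
        ≤ centeredMean (fun s => ε / 2 + ‖w s‖) r :=
          centeredMean_mono hq.norm (continuous_const.add hwc.norm) hqw hr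
      _ = ε / 2 + centeredMean (fun s => ‖w s‖) r := by
          rw [centeredMean_add continuous_const hwc.norm, centeredMean_const hr.ne']
      _ ≤ ε := by linarith

end PAPZeroFn

lemma tendsto_intervalIntegral_of_norm_le {E : Type*} [NormedAddCommGroup E] [NormedSpace ℝ E]
    {F : ℕ → ℝ → E} {f : ℝ → E} {M : ℝ} (hF : ∀ n, AEStronglyMeasurable (F n))
    (hM : ∀ n s, ‖F n s‖ ≤ M) (hlim : ∀ s, Tendsto (fun n => F n s) atTop (𝓝 (f s)))
    (a b : ℝ) : Tendsto (fun n => ∫ s in a..b, F n s) atTop (𝓝 (∫ s in a..b, f s)) :=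
  intervalIntegral.tendsto_integral_filter_of_dominated_convergence (fun _ => M)
    (Eventually.of_forall fun n => (hF n).restrict)
    (Eventually.of_forall fun n => ae_of_all _ fun s _ => hM n s) intervalIntegrable_const
    (ae_of_all _ fun s _ => hlim s)

namespace AlmostAutomorphicFn

variable {Z Z' : Type*} [NormedAddCommGroup Z] [NormedAddCommGroup Z']

lemma comp_continuous {u : ℝ → Z} (hu : AlmostAutomorphicFn u) {F : Z → Z'} (hF : Continuous F) :
    AlmostAutomorphicFn (fun t => F (u t)) := by
  refine ⟨hF.comp hu.1, fun s => ?_⟩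
  obtain ⟨k, hk, g, hfwd, hbwd⟩ := hu.2 s
  exact ⟨k, hk, fun t => F (g t), fun t => (hF.tendsto _).comp (hfwd t),
    fun t => (hF.tendsto _).comp (hbwd t)⟩

lemma totallyBounded_range {g : ℝ → Z} (hg : AlmostAutomorphicFn g) :
    TotallyBounded (range g) := by
  refine Metric.totallyBounded_iff.2 fun ε hε => ?_
  by_contra! hcover
  obtain ⟨t, ht⟩ := Set.seq_of_forall_finite_exists
    (P := fun (t : ℝ) (T : Set ℝ) => ∀ t' ∈ T, ε ≤ dist (g t) (g t')) fun T hT => by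
      obtain ⟨_, ⟨t, rfl⟩, hfar⟩ := not_subset.1 (hcover _ (hT.image g))
      refine ⟨t, fun t' ht' => ?_⟩
      simpa using mt (mem_iUnion₂_of_mem (mem_image_of_mem g ht')) hfar
  obtain ⟨k, hk, _, hconv, -⟩ := hg.2 t
  obtain ⟨N, hN⟩ := Metric.cauchySeq_iff'.1 (hconv 0).cauchySeq ε hε
  refine (ht (k (N + 1)) (t (k N)) ⟨k N, hk (Nat.lt_succ_self N), rfl⟩).not_gt ?_
  simpa using hN (N + 1) (Nat.le_succ N)

/-- Choose windows `[τ m - (m+1), τ m + (m+1)]` on which `‖v‖` has integral at most `1/(m+1)`;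
along the almost automorphic subsequence of `τ`, the limit `v'` has zero integral on every
interval, and translating back shows the same for `v`. -/
theorem eq_zero_of_papZeroFn {v : ℝ → Z} (hv : AlmostAutomorphicFn v) (hv₀ : PAPZeroFn v) :
    v = 0 := by
  obtain ⟨hvc, ⟨M, hM⟩, hmean⟩ := papZeroFn_iff.1 hv₀
  have hwindow (m : ℕ) : ∃ τ, ∫ s in (τ - (m + 1))..(τ + (m + 1)), ‖v s‖ ≤ 1 / (m + 1) :=
    exists_intervalIntegral_le_of_tendsto_centeredMean hvc.norm hmean (by positivity)
      (by positivity)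
  choose τ hτ using hwindow
  obtain ⟨k, hk, v', hfwd, hbwd⟩ := hv.2 τ
  have hv'M (s : ℝ) : ‖v' s‖ ≤ M :=
    le_of_tendsto (hfwd s).norm (Eventually.of_forall fun _ => hM _)
  have hv'meas : StronglyMeasurable v' :=
    stronglyMeasurable_of_tendsto atTop
      (fun n => (hvc.comp (continuous_add_const (τ (k n)))).stronglyMeasurable)
      (tendsto_pi_nhds.2 hfwd)
  have hv'zero (a b : ℝ) (hab : a ≤ b) : ∫ s in a..b, ‖v' s‖ = 0 := by
    refine le_antisymm ?_ (intervalIntegral.integral_nonneg hab fun _ _ => norm_nonneg _)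
    have hlim := tendsto_intervalIntegral_of_norm_le
      (fun n => (hvc.comp (continuous_add_const (τ (k n)))).norm.aestronglyMeasurable)
      (fun n s => by simpa using hM (s + τ (k n))) (fun s => (hfwd s).norm) a b
    have hsmall : ∀ᶠ n in atTop, ∫ s in a..b, ‖v (s + τ (k n))‖ ≤ 1 / ((k n : ℝ) + 1) := by
      filter_upwards [(tendsto_natCast_atTop_atTop.comp hk.tendsto_atTop).eventually_ge_atTop
        (max (-a) b)] with n hn
      have hn : max (-a) b ≤ k n := hn
      rw [intervalIntegral.integral_comp_add_right (fun s => ‖v s‖)]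
      refine le_trans ?_ (hτ (k n))
      exact intervalIntegral.integral_mono_interval (by linarith [le_max_left (-a) b])
        (by linarith) (by linarith [le_max_right (-a) b])
        (ae_of_all _ fun _ => norm_nonneg _) (hvc.norm.intervalIntegrable _ _)
    exact le_of_tendsto_of_tendsto hlim
      (tendsto_one_div_add_atTop_nhds_zero_nat.comp hk.tendsto_atTop) hsmall
  have hvzero (a b : ℝ) (hab : a ≤ b) : ∫ s in a..b, ‖v s‖ = 0 := by
    have hlim := tendsto_intervalIntegral_of_norm_le
      (fun n => (hv'meas.comp_measurable (measurable_sub_const (τ (k n)))).norm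
        |>.aestronglyMeasurable)
      (fun n s => by simpa using hv'M (s - τ (k n))) (fun s => (hbwd s).norm) a b
    refine tendsto_nhds_unique hlim (tendsto_const_nhds.congr fun n => ?_)
    rw [Function.comp_def, intervalIntegral.integral_comp_sub_right (fun s => ‖v' s‖),
      hv'zero _ _ (by linarith)]
  funext t
  by_contra ht
  have hpos := intervalIntegral.integral_pos (lt_add_one t) hvc.norm.continuousOn
    (fun _ _ => norm_nonneg _) ⟨t, left_mem_Icc.2 (by linarith), norm_pos_iff.2 ht⟩
  exact hpos.ne' (hvzero t (t + 1) (by linarith))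

theorem norm_le_of_norm_le_add {u : ℝ → Z} {w : ℝ → Z'} (hu : AlmostAutomorphicFn u)
    (hw : PAPZeroFn w) {ε : ℝ} (h : ∀ s, ‖u s‖ ≤ ε + ‖w s‖) (t : ℝ) : ‖u t‖ ≤ ε := by
  have hv := hu.comp_continuous (F := fun z => max (‖z‖ - ε) 0) (by fun_prop)
  have hv₀ : PAPZeroFn (fun s => max (‖u s‖ - ε) 0) :=
    .of_forall_norm_le_add hv.1 fun _ _ => ⟨w, hw, fun s => by
      rw [Real.norm_of_nonneg (le_max_right _ _)]
      exact max_le (by linarith [h s]) (by positivity)⟩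
  have := congrFun (hv.eq_zero_of_papZeroFn hv₀) t
  simp only [Pi.zero_apply, max_eq_right_iff] at this
  linarith

end AlmostAutomorphicFn

lemma pseudoAlmostAutomorphicFn_add {Z : Type*} [NormedAddCommGroup Z] {g φ : ℝ → Z}
    (hg : AlmostAutomorphicFn g) (hφ : PAPZeroFn φ) :
    PseudoAlmostAutomorphicFn (fun t => g t + φ t) := by
  obtain ⟨Mg, hMg⟩ := isBounded_iff_forall_norm_le.1 hg.totallyBounded_range.isBounded
  obtain ⟨Mφ, hMφ⟩ := hφ.2.1
  exact ⟨hg.1.add hφ.1, ⟨Mg + Mφ, fun t => (norm_add_le _ _).trans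
    (add_le_add (hMg _ (mem_range_self t)) (hMφ t))⟩, g, φ, hg, hφ, fun _ => rfl⟩

/-- The `ε`-`η` form (with non-strict inequalities) of Mathlib's `UniformEquicontinuousOn`. -/
def EquiUniformlyContinuousOn {ι Y X : Type*} [SeminormedAddCommGroup Y]
    [SeminormedAddCommGroup X] (F : ι → Y → X) (K : Set Y) : Prop :=
  ∀ ε > 0, ∃ η > 0, ∀ i, ∀ x ∈ K, ∀ y ∈ K, ‖x - y‖ ≤ η → ‖F i x - F i y‖ ≤ ε

namespace EquiUniformlyContinuousOn

variable {ι Y X : Type*} [NormedAddCommGroup Y] [NormedAddCommGroup X] {F G : ι → Y → X}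
  {K : Set Y}

lemma sub (hF : EquiUniformlyContinuousOn F K) (hG : EquiUniformlyContinuousOn G K) :
    EquiUniformlyContinuousOn (fun i x => F i x - G i x) K := by
  intro ε hε
  obtain ⟨η₁, hη₁, h₁⟩ := hF (ε / 2) (half_pos hε)
  obtain ⟨η₂, hη₂, h₂⟩ := hG (ε / 2) (half_pos hε)
  refine ⟨min η₁ η₂, lt_min hη₁ hη₂, fun i x hx y hy hxy => ?_⟩
  calc ‖F i x - G i x - (F i y - G i y)‖ = ‖(F i x - F i y) - (G i x - G i y)‖ := by
        congr 1; abel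
    _ ≤ ‖F i x - F i y‖ + ‖G i x - G i y‖ := norm_sub_le _ _
    _ ≤ ε / 2 + ε / 2 := add_le_add (h₁ i x hx y hy (hxy.trans (min_le_left _ _)))
        (h₂ i x hx y hy (hxy.trans (min_le_right _ _)))
    _ = ε := add_halves ε

lemma of_tendsto {ι' α : Type*} {l : Filter α} [l.NeBot] {F' : ι' → Y → X}
    (hF : EquiUniformlyContinuousOn F K) (j : ι' → α → ι)
    (hlim : ∀ i, ∀ x ∈ K, Tendsto (fun n => F (j i n) x) l (𝓝 (F' i x))) :
    EquiUniformlyContinuousOn F' K := fun ε hε =>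
  (hF ε hε).imp fun _ ⟨hη, h⟩ => ⟨hη, fun i x hx y hy hxy =>
    le_of_tendsto ((hlim i x hx).sub (hlim i y hy)).norm
      (Eventually.of_forall fun _ => h _ x hx y hy hxy)⟩

lemma tendsto_apply (hF : EquiUniformlyContinuousOn F K) {j : ℕ → ι} {y : ℕ → Y} {y₀ : Y}
    {z : X} (hyK : ∀ n, y n ∈ K) (hy₀ : y₀ ∈ K) (hy : Tendsto y atTop (𝓝 y₀))
    (hz : Tendsto (fun n => F (j n) y₀) atTop (𝓝 z)) :
    Tendsto (fun n => F (j n) (y n)) atTop (𝓝 z) := by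
  suffices h : Tendsto (fun n => F (j n) (y n) - F (j n) y₀) atTop (𝓝 0) by
    simpa using h.add hz
  refine Metric.tendsto_atTop.2 fun ε hε => ?_
  obtain ⟨η, hη, hFη⟩ := hF (ε / 2) (half_pos hε)
  obtain ⟨N, hN⟩ := Metric.tendsto_atTop.1 hy η hη
  refine ⟨N, fun n hn => ?_⟩
  rw [dist_zero_right]
  exact (hFη _ _ (hyK n) _ hy₀ (dist_eq_norm (y n) y₀ ▸ (hN n hn).le)).trans_lt
    (half_lt_self hε)

/-- On a convex set, uniform continuity at scale `η` propagates along segments: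
split `[y, x]` into `N` pieces of length at most `η`. -/
lemma norm_sub_le_of_convex [NormedSpace ℝ Y] {f : Y → X} (hK : Convex ℝ K) {η c : ℝ}
    (hf : ∀ x ∈ K, ∀ y ∈ K, ‖x - y‖ ≤ η → ‖f x - f y‖ ≤ c) (N : ℕ) :
    ∀ x ∈ K, ∀ y ∈ K, ‖x - y‖ ≤ N * η → ‖f x - f y‖ ≤ N * c := by
  induction N with
  | zero =>
    intro x _ y _ hxy
    obtain rfl : x = y := norm_sub_eq_zero_iff.1 (le_antisymm (by simpa using hxy) (norm_nonneg _))
    simp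
  | succ N ih =>
    intro x hx y hy hxy
    set z := y + ((N : ℝ) / (N + 1)) • (x - y)
    have hz : z ∈ K := hK.add_smul_sub_mem hy hx ⟨by positivity,
      div_le_one_of_le₀ (by linarith) (by positivity)⟩
    have hzy : ‖z - y‖ ≤ N * η := by
      rw [add_sub_cancel_left, norm_smul, Real.norm_of_nonneg (by positivity)]
      calc (N : ℝ) / (N + 1) * ‖x - y‖ ≤ N / (N + 1) * ((N + 1) * η) := by
            gcongr; exact_mod_cast hxy
        _ = N * η := by field_simp
    have hxz : ‖x - z‖ ≤ η := by
      have : x - z = (1 - (N : ℝ) / (N + 1)) • (x - y) := by simp only [z]; module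
      rw [show 1 - (N : ℝ) / (N + 1) = 1 / (N + 1) by field_simp; ring] at this
      rw [this, norm_smul, Real.norm_of_nonneg (by positivity)]
      calc 1 / ((N : ℝ) + 1) * ‖x - y‖ ≤ 1 / (N + 1) * ((N + 1) * η) := by
            gcongr; exact_mod_cast hxy
        _ = η := by field_simp
    calc ‖f x - f y‖ ≤ ‖f x - f z‖ + ‖f z - f y‖ := norm_sub_le_norm_sub_add_norm_sub _ _ _
      _ ≤ c + N * c := add_le_add (hf x hx z hz hxz) (ih z hz y hy hzy)
      _ = ((N + 1 : ℕ) : ℝ) * c := by push_cast; ring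

lemma exists_norm_sub_le [NormedSpace ℝ Y] (hF : EquiUniformlyContinuousOn F K)
    (hKc : Convex ℝ K) (hKb : IsBounded K) :
    ∃ B, ∀ i, ∀ x ∈ K, ∀ y ∈ K, ‖F i x - F i y‖ ≤ B := by
  obtain ⟨η, hη, hFη⟩ := hF 1 one_pos
  obtain ⟨C, hC⟩ := isBounded_iff_forall_norm_le.1 hKb
  obtain ⟨N, hN⟩ := exists_nat_ge (2 * C / η)
  refine ⟨N, fun i x hx y hy => ?_⟩
  simpa using norm_sub_le_of_convex hKc (hFη i) N x hx y hy <| calc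
    ‖x - y‖ ≤ ‖x‖ + ‖y‖ := norm_sub_le x y
    _ ≤ 2 * C := by linarith [hC x hx, hC y hy]
    _ ≤ N * η := by rwa [div_le_iff₀ hη] at hN

end EquiUniformlyContinuousOn

section Composition

variable {Y X : Type*} [NormedAddCommGroup Y] [NormedAddCommGroup X]

lemma AAUnifFn.apply_sub_apply {G : ℝ → Y → X} (hG : AAUnifFn G) (x y : Y) :
    AlmostAutomorphicFn (fun t => G t x - G t y) := by
  refine ⟨(hG.1.comp (continuous_id.prodMk continuous_const)).sub
    (hG.1.comp (continuous_id.prodMk continuous_const)), fun s => ?_⟩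
  obtain ⟨k, hk, G', hfwd, hbwd⟩ := hG.2 {x, y} (Set.toFinite _).isBounded s
  exact ⟨k, hk, fun t => G' t x - G' t y,
    fun t => (hfwd t x (by simp)).sub (hfwd t y (by simp)),
    fun t => (hbwd t x (by simp)).sub (hbwd t y (by simp))⟩

lemma PAPZeroUnifFn.apply {Φ : ℝ → Y → X} (hΦ : PAPZeroUnifFn Φ) (x : Y) :
    PAPZeroFn (fun t => Φ t x) := by
  obtain ⟨M, hM⟩ := hΦ.2.1 {x} isBounded_singleton
  refine papZeroFn_iff.2 ⟨hΦ.1.comp (continuous_id.prodMk continuous_const),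
    ⟨M, fun t => hM t x rfl⟩, tendsto_centeredMean_zero (fun _ => norm_nonneg _) fun ε hε => ?_⟩
  obtain ⟨r₀, -, h⟩ := hΦ.2.2 {x} isBounded_singleton ε hε
  exact eventually_atTop.2 ⟨r₀, fun r hr => h r hr x rfl⟩

lemma AAUnifFn.equiUniformlyContinuousOn {G Φ : ℝ → Y → X} {K : Set Y} (hG : AAUnifFn G)
    (hΦ : PAPZeroUnifFn Φ) (hf : EquiUniformlyContinuousOn (fun t x => G t x + Φ t x) K) :
    EquiUniformlyContinuousOn G K := by
  intro ε hε
  obtain ⟨η, hη, hfη⟩ := hf ε hε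
  refine ⟨η, hη, fun t x hx y hy hxy => ?_⟩
  refine (hG.apply_sub_apply x y).norm_le_of_norm_le_add ((hΦ.apply x).sub (hΦ.apply y))
    (fun s => ?_) t
  calc ‖G s x - G s y‖ = ‖(G s x + Φ s x - (G s y + Φ s y)) - (Φ s x - Φ s y)‖ := by
        congr 1; abel
    _ ≤ ε + ‖Φ s x - Φ s y‖ := (norm_sub_le _ _).trans (add_le_add (hfη s x hx y hy hxy) le_rfl)

lemma AAUnifFn.comp {G : ℝ → Y → X} {K : Set Y} {g : ℝ → Y} (hG : AAUnifFn G)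
    (hGK : EquiUniformlyContinuousOn G K) (hKb : IsBounded K) (hKc : IsClosed K)
    (hg : AlmostAutomorphicFn g) (hgK : ∀ t, g t ∈ K) :
    AlmostAutomorphicFn (fun t => G t (g t)) := by
  refine ⟨hG.1.comp (continuous_id.prodMk hg.1), fun s => ?_⟩
  obtain ⟨k₁, hk₁, g', hg₁, hg₂⟩ := hg.2 s
  obtain ⟨k₂, hk₂, G', hG₁, hG₂⟩ := hG.2 K hKb (s ∘ k₁)
  have hg'K (t : ℝ) : g' t ∈ K :=
    hKc.mem_of_tendsto (hg₁ t) (Eventually.of_forall fun _ => hgK _)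
  have hG'K : EquiUniformlyContinuousOn G' K :=
    hGK.of_tendsto (fun t n => t + s (k₁ (k₂ n))) hG₁
  refine ⟨k₁ ∘ k₂, hk₁.comp hk₂, fun t => G' t (g' t), fun t => ?_, fun t => ?_⟩
  · exact hGK.tendsto_apply (fun _ => hgK _) (hg'K t) ((hg₁ t).comp hk₂.tendsto_atTop)
      (hG₁ t _ (hg'K t))
  · exact hG'K.tendsto_apply (fun _ => hg'K _) (hgK t) ((hg₂ t).comp hk₂.tendsto_atTop)
      (hG₂ t _ (hgK t))

/-- Where `a` and `b` are `η`-close the difference is at most `ε`; elsewhere it is at most the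
oscillation bound `B ≤ (B / η) ‖a - b‖`. -/
lemma PAPZeroFn.apply_sub_apply [NormedSpace ℝ Y] {F : ℝ → Y → X} {K : Set Y} {a b : ℝ → Y}
    {B : ℝ} (hab : PAPZeroFn (fun t => a t - b t)) (hF : Continuous (fun p : ℝ × Y => F p.1 p.2))
    (hFK : EquiUniformlyContinuousOn F K) (hB : ∀ t, ∀ x ∈ K, ∀ y ∈ K, ‖F t x - F t y‖ ≤ B)
    (ha : Continuous a) (hb : Continuous b) (haK : ∀ t, a t ∈ K) (hbK : ∀ t, b t ∈ K) :
    PAPZeroFn (fun t => F t (a t) - F t (b t)) := by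
  refine PAPZeroFn.of_forall_norm_le_add (Z' := Y) ((hF.comp (continuous_id.prodMk ha)).sub
    (hF.comp (continuous_id.prodMk hb))) fun ε hε => ?_
  obtain ⟨η, hη, hFη⟩ := hFK ε hε
  have hB₀ : 0 ≤ B := (norm_nonneg _).trans (hB 0 _ (haK 0) _ (haK 0))
  refine ⟨fun t => (B / η) • (a t - b t), hab.const_smul _, fun t => ?_⟩
  rw [norm_smul, Real.norm_of_nonneg (by positivity)]
  rcases le_or_gt ‖a t - b t‖ η with hclose | hfar
  · exact (hFη t _ (haK t) _ (hbK t) hclose).trans (le_add_of_nonneg_right (by positivity))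
  · calc ‖F t (a t) - F t (b t)‖ ≤ B := hB t _ (haK t) _ (hbK t)
      _ ≤ B / η * ‖a t - b t‖ := by
          rw [div_mul_eq_mul_div, le_div_iff₀ hη]; gcongr
      _ ≤ ε + B / η * ‖a t - b t‖ := le_add_of_nonneg_left hε.le

/-- Cover the totally bounded range of `g` by finitely many `η`-balls centred at `g σ`; then
`‖Φ s (g s)‖ ≤ ε + ∑ σ, ‖Φ s (g σ)‖`, a finite sum of ergodic functions. -/
lemma PAPZeroUnifFn.comp {Φ : ℝ → Y → X} {K : Set Y} {g : ℝ → Y} (hΦ : PAPZeroUnifFn Φ)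
    (hΦK : EquiUniformlyContinuousOn Φ K) (hg : Continuous g) (hgK : ∀ t, g t ∈ K)
    (hgb : TotallyBounded (range g)) : PAPZeroFn (fun t => Φ t (g t)) := by
  refine PAPZeroFn.of_forall_norm_le_add (Z' := ℝ) (hΦ.1.comp (continuous_id.prodMk hg))
    fun ε hε => ?_
  obtain ⟨η, hη, hΦη⟩ := hΦK ε hε
  obtain ⟨T, hTg, hT, hcover⟩ := Metric.finite_approx_of_totallyBounded hgb η hη
  refine ⟨fun s => ∑ y ∈ hT.toFinset, ‖Φ s y‖, .sum _ fun y _ => (hΦ.apply y).norm, fun s => ?_⟩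
  obtain ⟨y, hyT, hy⟩ := mem_iUnion₂.1 (hcover (mem_range_self s))
  obtain ⟨σ, rfl⟩ := hTg hyT
  calc ‖Φ s (g s)‖ ≤ ‖Φ s (g σ)‖ + ‖Φ s (g s) - Φ s (g σ)‖ := norm_le_insert' _ _
    _ ≤ ∑ y ∈ hT.toFinset, ‖Φ s y‖ + ε := add_le_add
        (Finset.single_le_sum (f := fun y => ‖Φ s y‖) (fun _ _ => norm_nonneg _)
          (hT.mem_toFinset.2 hyT))
        (hΦη s _ (hgK s) _ (hgK σ) (by rw [← dist_eq_norm]; exact (Metric.mem_ball.1 hy).le))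
    _ ≤ ε + ‖∑ y ∈ hT.toFinset, ‖Φ s y‖‖ := by rw [add_comm]; gcongr; exact Real.le_norm_self _

end Composition

theorem composition_preserves_PAA_general
    {X Y : Type*} [NormedAddCommGroup X]
    [NormedAddCommGroup Y] [NormedSpace ℝ Y]
    (f : ℝ → Y → X) (hfpaa : PAAUnifFn f)
    (hfuc : ∀ K : Set Y, IsBounded K → ∀ ε > (0 : ℝ), ∃ η > (0 : ℝ),
      ∀ t : ℝ, ∀ x ∈ K, ∀ y ∈ K, ‖x - y‖ ≤ η → ‖f t x - f t y‖ ≤ ε)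
    (φ : ℝ → Y) (hφ : PseudoAlmostAutomorphicFn φ) :
    PseudoAlmostAutomorphicFn (fun t : ℝ => f t (φ t)) := by
  obtain ⟨G, Φ, hG, hΦ, hf⟩ := hfpaa
  obtain rfl : f = fun t x => G t x + Φ t x := funext₂ hf
  obtain ⟨hφc, ⟨Mφ, hMφ⟩, g, ψ, hg, hψ, hφg⟩ := hφ
  obtain ⟨R, hR⟩ := (hg.totallyBounded_range.isBounded.union
    (isBounded_iff_forall_norm_le.2 ⟨Mφ, forall_mem_range.2 hMφ⟩)).subset_closedBall 0
  have hgK (t : ℝ) : g t ∈ Metric.closedBall 0 R := hR (Or.inl (mem_range_self t))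
  have hφK (t : ℝ) : φ t ∈ Metric.closedBall 0 R := hR (Or.inr (mem_range_self t))
  have hfK : EquiUniformlyContinuousOn (fun t x => G t x + Φ t x) (Metric.closedBall 0 R) :=
    hfuc _ Metric.isBounded_closedBall
  have hGK := hG.equiUniformlyContinuousOn hΦ hfK
  have hΦK : EquiUniformlyContinuousOn Φ (Metric.closedBall 0 R) := by
    simpa using hfK.sub hGK
  obtain ⟨B, hB⟩ := hfK.exists_norm_sub_le (convex_closedBall 0 R) Metric.isBounded_closedBall
  have hφψ : PAPZeroFn (fun t => φ t - g t) := by simpa [hφg] using hψ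
  convert pseudoAlmostAutomorphicFn_add
    (hG.comp hGK Metric.isBounded_closedBall Metric.isClosed_closedBall hg hgK)
    ((hφψ.apply_sub_apply (hG.1.add hΦ.1) hfK hB hφc hg.1 hφK hgK).add
      (hΦ.comp hΦK hg.1 hgK hg.totallyBounded_range)) using 2 with t
  dsimp only
  abel

theorem composition_preserves_PAA
    {X Y : Type*} [NormedAddCommGroup X] [NormedSpace ℝ X] [CompleteSpace X]
    [NormedAddCommGroup Y] [NormedSpace ℝ Y] [CompleteSpace Y]
    (f : ℝ → Y → X) (hfpaa : PAAUnifFn f)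
    (hfuc : ∀ K : Set Y, IsBounded K → ∀ ε > (0 : ℝ), ∃ η > (0 : ℝ),
      ∀ t : ℝ, ∀ x ∈ K, ∀ y ∈ K, ‖x - y‖ ≤ η → ‖f t x - f t y‖ ≤ ε)
    (φ : ℝ → Y) (hφ : PseudoAlmostAutomorphicFn φ) :
    PseudoAlmostAutomorphicFn (fun t : ℝ => f t (φ t)) :=
  composition_preserves_PAA_general f hfpaa hfuc φ hφ
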